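/- arXiv:1002.0757 — 2 statements merged into one kernel-verified Lean document; each statement's English description precedes it below -/
import Mathlib

section
/- Fix s ∈ {0, 2, 4} and let f(μ) be a continuous function of μ. Let X, X_1, X_2, … be i.i.d. ∼ P with mean μ*, let μ̂_i := (n_0·x_0 + Σ_{j=1}^i X_j)/(i + n_0) for constants x_0 and n_0 > 0. Suppose that for both T := X and T := −X: if T is unbounded from above then there exists an even k ≥ 4 such that the first k moments of T exist under P and f(μ) = O(μ^{k−s−2}); and if T is bounded from above by a constant g then f(μ) is polynomial in 1/(g − μ). Then E_P[f(μ) · (μ̂_i − μ*)^s], where μ is any (measurably chosen) point between μ* and μ̂_i, is of order O(i^{−s/2}) as i → ∞. -/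
/-!
Write `d := μ̂_i - μ*`. On the tails the side conditions give `|f x| ≤ c (1 + |x - μ*| ^ (k - s))`
where the `k`-th moments exist (on a side where `X` is bounded, `μ̂_i` never reaches the tail);
continuity bounds `f` in between. Since `|ξ_i - μ*| ≤ |d|`, this gives
`|f (ξ_i) d ^ s| ≤ M (d ^ s + d ^ m)` for an even `m` with finite `m`-th moment, so it suffices that
`E d ^ m = O(i ^ (-m / 2))` for every such even `m`. Expanding `(∑ (X_j - μ*)) ^ m`
multinomially, independence factors each term, terms with an exponent `1` have mean zero, and
only `O(i ^ (m / 2))` terms remain.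
-/

open MeasureTheory Filter Real Asymptotics ProbabilityTheory

/-- The hypothesis of the paper for one sign: `T := X` with `fT := f`, or `T := -X` with
`fT := fun μ => f (-μ)`. -/
def SideCond {Ω : Type} [MeasurableSpace Ω] (P : Measure Ω) (T : Ω → ℝ)
    (fT : ℝ → ℝ) (s : ℕ) : Prop :=
  ((¬ ∃ g : ℝ, ∀ᵐ ω ∂P, T ω ≤ g) →
    ∃ k : ℕ, 4 ≤ k ∧ Even k ∧
      (∀ j ≤ k, Integrable (fun ω => |T ω| ^ j) P) ∧
      fT =O[atTop] (fun μ : ℝ => μ ^ ((k : ℤ) - (s : ℤ) - 2))) ∧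
  ((∃ g : ℝ, ∀ᵐ ω ∂P, T ω ≤ g) →
    ∃ g : ℝ, (∀ᵐ ω ∂P, T ω ≤ g) ∧
      ∃ p : Polynomial ℝ, ∀ μ < g, fT μ = Polynomial.eval (1 / (g - μ)) p)

open Finset
open scoped Nat

lemma pow_le_one_add_pow {a : ℝ} (ha : 0 ≤ a) {d e : ℕ} (hde : d ≤ e) : a ^ d ≤ 1 + a ^ e := by
  rcases le_total a 1 with h | h
  · exact (pow_le_one₀ ha h).trans (le_add_of_nonneg_right (pow_nonneg ha e))
  · exact (pow_le_pow_right₀ h hde).trans (le_add_of_nonneg_left zero_le_one)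

lemma abs_pow_le_mul_one_add_abs_sub_pow (x ν : ℝ) (e : ℕ) :
    |x| ^ e ≤ 2 ^ (e - 1) * (1 + |ν| ^ e) * (1 + |x - ν| ^ e) := by
  have hx : |x| ≤ |ν| + |x - ν| := by simpa using abs_add_le ν (x - ν)
  have ha : 0 ≤ |ν| ^ e := by positivity
  have hb : 0 ≤ |x - ν| ^ e := by positivity
  calc |x| ^ e ≤ (|ν| + |x - ν|) ^ e := by gcongr
    _ ≤ 2 ^ (e - 1) * (|ν| ^ e + |x - ν| ^ e) := add_pow_le (abs_nonneg _) (abs_nonneg _) e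
    _ ≤ 2 ^ (e - 1) * (1 + |ν| ^ e) * (1 + |x - ν| ^ e) := by
        rw [mul_assoc]
        gcongr
        nlinarith

lemma Asymptotics.IsBigO.exists_abs_le_mul_pow {f : ℝ → ℝ} {n : ℤ} {e : ℕ}
    (h : f =O[atTop] fun x => x ^ n) (hne : n ≤ e) :
    ∃ c A, 0 ≤ c ∧ ∀ x, A ≤ x → |f x| ≤ c * x ^ e := by
  obtain ⟨c, hc⟩ := h.bound
  obtain ⟨A, hA⟩ := eventually_atTop.1 hc
  refine ⟨max c 0, max A 1, le_max_right _ _, fun x hx => ?_⟩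
  have hx1 : 1 ≤ x := le_of_max_le_right hx
  have hx0 : 0 < x := by linarith
  calc |f x| ≤ c * |x ^ n| := by simpa using hA x (le_of_max_le_left hx)
    _ ≤ max c 0 * x ^ (e : ℤ) := by
        rw [abs_of_pos (zpow_pos hx0 n)]
        exact mul_le_mul (le_max_left _ _) (zpow_le_zpow_right₀ hx1 hne) (zpow_pos hx0 n).le
          (le_max_right _ _)
    _ = max c 0 * x ^ e := by rw [zpow_natCast]

namespace Finset

variable {ι : Type*} [DecidableEq ι]

lemma le_of_mem_piAntidiag {s : Finset ι} {t : ℕ} {k : ι → ℕ} (hk : k ∈ piAntidiag s t) (j : ι) :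
    k j ≤ t := by
  rw [mem_piAntidiag] at hk
  by_cases hj : j ∈ s
  · exact hk.1 ▸ single_le_sum (fun _ _ => Nat.zero_le _) hj
  · simp [not_imp_comm.1 (hk.2 j) hj]

lemma card_piAntidiag_le (s : Finset ι) (t : ℕ) : #(piAntidiag s t) ≤ (t + 1) ^ #s := by
  calc #(piAntidiag s t) ≤ #(s.pi fun _ => range (t + 1)) := by
        refine card_le_card_of_injOn (fun k a _ => k a) (fun k hk => ?_) (fun k hk l hl hkl => ?_)
        · simpa [mem_pi, Nat.lt_succ_iff] using fun a _ => le_of_mem_piAntidiag hk a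
        · rw [mem_coe, mem_piAntidiag] at hk hl
          funext a
          by_cases ha : a ∈ s
          · exact congrFun (congrFun hkl a) ha
          · rw [not_imp_comm.1 (hk.2 a) ha, not_imp_comm.1 (hl.2 a) ha]
    _ = (t + 1) ^ #s := by simp [card_pi]

/-- Tuples without a `1` have at most `t / 2` nonzero entries, so they are supported on one of
the `(#s choose t / 2) ≤ #s ^ (t / 2)` subsets of size `t / 2`. -/
lemma card_filter_piAntidiag_forall_ne_one_le (s : Finset ι) (t : ℕ) (ht : t / 2 ≤ #s) :
    #{k ∈ piAntidiag s t | ∀ a ∈ s, k a ≠ 1} ≤ #s ^ (t / 2) * (t + 1) ^ (t / 2) := by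
  classical
  have hsub : {k ∈ piAntidiag s t | ∀ a ∈ s, k a ≠ 1} ⊆
      (powersetCard (t / 2) s).biUnion fun S => piAntidiag S t := by
    intro k hk
    simp only [mem_filter, mem_piAntidiag] at hk
    obtain ⟨⟨hsum, hsupp⟩, hne⟩ := hk
    have hcard : #{a ∈ s | k a ≠ 0} ≤ t / 2 := by
      have : #{a ∈ s | k a ≠ 0} * 2 ≤ t := by
        calc #{a ∈ s | k a ≠ 0} * 2 = ∑ a ∈ s with k a ≠ 0, 2 := by simp
          _ ≤ ∑ a ∈ s with k a ≠ 0, k a := sum_le_sum fun a ha => by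
                have := hne a (mem_filter.1 ha).1; have := (mem_filter.1 ha).2; omega
          _ ≤ t := hsum ▸ sum_le_sum_of_subset (filter_subset _ _)
      omega
    obtain ⟨S, hkS, hSs, hS⟩ := exists_subsuperset_card_eq (filter_subset _ s) hcard ht
    refine mem_biUnion.2 ⟨S, mem_powersetCard.2 ⟨hSs, hS⟩, mem_piAntidiag.2 ⟨?_, ?_⟩⟩
    · rw [← hsum]
      exact sum_subset hSs fun a ha haS => not_not.1 fun h => haS (hkS (mem_filter.2 ⟨ha, h⟩))
    · exact fun a ha => hkS (mem_filter.2 ⟨hsupp a ha, ha⟩)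
  calc #{k ∈ piAntidiag s t | ∀ a ∈ s, k a ≠ 1}
      ≤ ∑ S ∈ powersetCard (t / 2) s, #(piAntidiag S t) :=
        (card_le_card hsub).trans card_biUnion_le
    _ ≤ ∑ _S ∈ powersetCard (t / 2) s, (t + 1) ^ (t / 2) := sum_le_sum fun S hS => by
        simpa [(mem_powersetCard.1 hS).2] using card_piAntidiag_le S t
    _ ≤ #s ^ (t / 2) * (t + 1) ^ (t / 2) := by
        rw [sum_const, card_powersetCard, smul_eq_mul]
        exact Nat.mul_le_mul_right _ (Nat.choose_le_pow _ _)

end Finset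

lemma Nat.multinomial_le_factorial {ι : Type*} (s : Finset ι) (k : ι → ℕ) :
    Nat.multinomial s k ≤ (∑ a ∈ s, k a)! :=
  (Nat.le_mul_of_pos_left _ (prod_pos fun _ _ => Nat.factorial_pos _)).trans_eq
    (Nat.multinomial_spec s k)

namespace ProbabilityTheory

variable {Ω ι : Type*} [MeasurableSpace Ω] {P : Measure Ω} {Z : ι → Ω → ℝ}

lemma iIndepFun.integrable_finset_prod (hZ : iIndepFun Z P) (hmeas : ∀ j, Measurable (Z j))
    (hint : ∀ j, Integrable (Z j) P) (S : Finset ι) :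
    Integrable (fun ω => ∏ j ∈ S, Z j ω) P := by
  have := hZ.isProbabilityMeasure
  classical
  induction S using Finset.cons_induction with
  | empty => simp
  | cons a S ha ih =>
    have hind := (hZ.indepFun_finsetProd_of_notMem hmeas ha).symm
    rw [Finset.prod_fn] at hind
    simp only [prod_cons]
    exact hind.integrable_mul (hint a) ih

lemma iIndepFun.integral_finset_prod (hZ : iIndepFun Z P)
    (hmeas : ∀ j, AEStronglyMeasurable (Z j) P) (S : Finset ι) :
    ∫ ω, ∏ j ∈ S, Z j ω ∂P = ∏ j ∈ S, ∫ ω, Z j ω ∂P := by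
  simp_rw [← Finset.prod_coe_sort S]
  exact (hZ.precomp Subtype.val_injective).integral_fun_prod_eq_prod_integral fun j => hmeas j

variable [DecidableEq ι] {W : ι → Ω → ℝ}

lemma iIndepFun.integral_sum_pow (hW : iIndepFun W P) (hmeas : ∀ j, Measurable (W j)) {t : ℕ}
    (hint : ∀ j, ∀ c ≤ t, Integrable (fun ω => W j ω ^ c) P) (s : Finset ι) :
    ∫ ω, (∑ j ∈ s, W j ω) ^ t ∂P
      = ∑ k ∈ piAntidiag s t, (Nat.multinomial s k : ℝ) * ∏ j ∈ s, ∫ ω, W j ω ^ k j ∂P := by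
  have hWk (k : ι → ℕ) : iIndepFun (fun j ω => W j ω ^ k j) P :=
    hW.comp (fun j x => x ^ k j) fun j => measurable_id.pow_const _
  have hprod (k) (hk : k ∈ piAntidiag s t) : Integrable (fun ω => ∏ j ∈ s, W j ω ^ k j) P :=
    (hWk k).integrable_finset_prod (fun j => (hmeas j).pow_const _)
      (fun j => hint j _ (le_of_mem_piAntidiag hk j)) s
  simp_rw [sum_pow_eq_sum_piAntidiag]
  rw [integral_finsetSum _ fun k hk => (hprod k hk).const_mul _]
  refine sum_congr rfl fun k hk => ?_
  rw [integral_const_mul, (hWk k).integral_finset_prod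
    (fun j => ((hmeas j).pow_const _).aestronglyMeasurable) s]

lemma abs_prod_integral_pow_le [IsProbabilityMeasure P] {t : ℕ} {B : ℝ} (hB : 1 ≤ B)
    (hmom : ∀ j, ∀ c ≤ t, |∫ ω, W j ω ^ c ∂P| ≤ B) {s : Finset ι} {k : ι → ℕ}
    (hk : k ∈ piAntidiag s t) : |∏ j ∈ s, ∫ ω, W j ω ^ k j ∂P| ≤ B ^ t := by
  have hfactor (j : ι) : |∫ ω, W j ω ^ k j ∂P| ≤ B ^ k j := by
    rcases (k j).eq_zero_or_pos with h | h
    · simp [h]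
    · exact (hmom j _ (le_of_mem_piAntidiag hk j)).trans (le_self_pow₀ hB h.ne')
  rw [abs_prod, ← (mem_piAntidiag.1 hk).1, ← prod_pow_eq_pow_sum]
  exact prod_le_prod (fun _ _ => abs_nonneg _) fun j _ => hfactor j

/-- Expanding the power, every product containing some `W a` to the first power has mean zero;
the remaining `O(#s ^ (t / 2))` products are bounded by `t! * B ^ t`. -/
theorem abs_integral_sum_pow_le (hW : iIndepFun W P) (hmeas : ∀ j, Measurable (W j)) {t : ℕ}
    (hint : ∀ j, ∀ c ≤ t, Integrable (fun ω => W j ω ^ c) P) (hmean : ∀ j, ∫ ω, W j ω ∂P = 0)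
    {B : ℝ} (hB : 1 ≤ B) (hmom : ∀ j, ∀ c ≤ t, |∫ ω, W j ω ^ c ∂P| ≤ B)
    (s : Finset ι) (hs : t / 2 ≤ #s) :
    |∫ ω, (∑ j ∈ s, W j ω) ^ t ∂P|
      ≤ (t + 1) ^ (t / 2) * t ! * B ^ t * (#s : ℝ) ^ (t / 2) := by
  have := hW.isProbabilityMeasure
  have hvanish : ∀ k ∈ piAntidiag s t, (∃ a ∈ s, k a = 1) →
      (Nat.multinomial s k : ℝ) * ∏ j ∈ s, ∫ ω, W j ω ^ k j ∂P = 0 := by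
    rintro k - ⟨a, ha, hka⟩
    rw [prod_eq_zero ha (by simp only [hka, pow_one, hmean]), mul_zero]
  have hterm : ∀ k ∈ piAntidiag s t,
      |(Nat.multinomial s k : ℝ) * ∏ j ∈ s, ∫ ω, W j ω ^ k j ∂P| ≤ t ! * B ^ t := by
    intro k hk
    rw [abs_mul, Nat.abs_cast]
    gcongr
    · exact_mod_cast (mem_piAntidiag.1 hk).1 ▸ Nat.multinomial_le_factorial s k
    · exact abs_prod_integral_pow_le hB hmom hk
  calc |∫ ω, (∑ j ∈ s, W j ω) ^ t ∂P|
      = |∑ k ∈ piAntidiag s t with ∀ a ∈ s, k a ≠ 1,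
          (Nat.multinomial s k : ℝ) * ∏ j ∈ s, ∫ ω, W j ω ^ k j ∂P| := by
        rw [hW.integral_sum_pow hmeas hint, sum_filter_of_ne fun k hk hne => ?_]
        by_contra! h
        exact hne (hvanish k hk h)
    _ ≤ ∑ k ∈ piAntidiag s t with ∀ a ∈ s, k a ≠ 1, (t ! * B ^ t : ℝ) :=
        (abs_sum_le_sum_abs _ _).trans (sum_le_sum fun k hk => hterm k (mem_filter.1 hk).1)
    _ ≤ (#s ^ (t / 2) * (t + 1) ^ (t / 2) : ℕ) * (t ! * B ^ t : ℝ) := by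
        rw [sum_const, nsmul_eq_mul]
        gcongr
        exact_mod_cast card_filter_piAntidiag_forall_ne_one_le s t hs
    _ = (t + 1) ^ (t / 2) * t ! * B ^ t * (#s : ℝ) ^ (t / 2) := by
        push_cast
        ring

end ProbabilityTheory

section Moments

variable {Ω : Type*} [MeasurableSpace Ω] {P : Measure Ω}

lemma MeasureTheory.MemLp.integrable_pow [IsFiniteMeasure P] {f : Ω → ℝ} {p : ℕ}
    (hf : MemLp f p P) : Integrable (fun ω => f ω ^ p) P :=
  hf.integrable_norm_pow'.mono' (hf.1.pow p) (.of_forall fun ω => by simp)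

lemma abs_integral_pow_le_one_add_integral_abs_pow [IsProbabilityMeasure P] {f : Ω → ℝ}
    {c m : ℕ} (hf : MemLp f m P) (hc : c ≤ m) :
    |∫ ω, f ω ^ c ∂P| ≤ 1 + ∫ ω, |f ω| ^ m ∂P := by
  have habs : Integrable (fun ω => |f ω| ^ m) P := by simpa using hf.integrable_norm_pow'
  calc |∫ ω, f ω ^ c ∂P| ≤ ∫ ω, |f ω| ^ c ∂P := by
        simpa [abs_pow] using abs_integral_le_integral_abs (f := fun ω => f ω ^ c)
    _ ≤ ∫ ω, (1 + |f ω| ^ m) ∂P :=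
        integral_mono
          (by simpa [abs_pow] using (hf.mono_exponent (by exact_mod_cast hc)).integrable_pow.abs)
          ((integrable_const 1).add habs) fun ω => pow_le_one_add_pow (abs_nonneg _) hc
    _ = 1 + ∫ ω, |f ω| ^ m ∂P := by
        rw [integral_add (integrable_const 1) habs, integral_const, probReal_univ, one_smul]

lemma memLp_of_integrable_abs_pow {T : Ω → ℝ} {k : ℕ} (hk : k ≠ 0)
    (hT : AEStronglyMeasurable T P) (h : Integrable (fun ω => |T ω| ^ k) P) : MemLp T k P := by
  rw [← integrable_norm_rpow_iff hT (by exact_mod_cast hk) (by simp)]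
  simpa using h

lemma memLp_max_of_bdd_or_memLp [IsFiniteMeasure P] {T : Ω → ℝ} (hT : AEStronglyMeasurable T P)
    {s k₁ k₂ : ℕ} (hsk₁ : s ≤ k₁) (hsk₂ : s ≤ k₂)
    (h₁ : (k₁ = s ∧ ∃ g, ∀ᵐ ω ∂P, T ω ≤ g) ∨ MemLp T k₁ P)
    (h₂ : (k₂ = s ∧ ∃ g, ∀ᵐ ω ∂P, -T ω ≤ g) ∨ MemLp (fun ω => -T ω) k₂ P) :
    MemLp T (max k₁ k₂ : ℕ) P := by
  have h₂' : (k₂ = s ∧ ∃ g, ∀ᵐ ω ∂P, -T ω ≤ g) ∨ MemLp T k₂ P :=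
    h₂.imp_right memLp_neg_iff.1
  rcases h₁ with ⟨rfl, g₁, hg₁⟩ | h₁ <;> rcases h₂' with ⟨rfl, g₂, hg₂⟩ | h₂'
  · refine MemLp.of_bound hT (max g₁ g₂) ?_
    filter_upwards [hg₁, hg₂] with ω h₁ h₂
    rw [Real.norm_eq_abs, abs_le]
    constructor <;> linarith [le_max_left g₁ g₂, le_max_right g₁ g₂]
  · rwa [max_eq_right hsk₂]
  · rwa [max_eq_left hsk₁]
  · rcases le_total k₁ k₂ with h | h
    · rwa [max_eq_right h]
    · rwa [max_eq_left h]

lemma abs_integral_mul_pow_le [IsFiniteMeasure P] {F d : Ω → ℝ} {M : ℝ} {s m : ℕ}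
    (hs : Even s) (hm : Even m) (hsm : s ≤ m) (hd : MemLp d m P) (hF : ∀ᵐ ω ∂P, |F ω| ≤ M * (1 + |d ω| ^ (m - s))) :
    |∫ ω, F ω * d ω ^ s ∂P| ≤ M * (∫ ω, d ω ^ s ∂P + ∫ ω, d ω ^ m ∂P) := by
  have hds : Integrable (fun ω => d ω ^ s) P :=
    (hd.mono_exponent (by exact_mod_cast hsm)).integrable_pow
  rw [← integral_add hds hd.integrable_pow, ← integral_const_mul, ← Real.norm_eq_abs]
  refine norm_integral_le_of_norm_le ((hds.add hd.integrable_pow).const_mul M) ?_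
  filter_upwards [hF] with ω hω
  rw [Real.norm_eq_abs, abs_mul, abs_pow, ← hs.pow_abs (d ω), ← hm.pow_abs (d ω),
    ← Nat.sub_add_cancel hsm, pow_add]
  calc |F ω| * |d ω| ^ s ≤ M * (1 + |d ω| ^ (m - s)) * |d ω| ^ s := by gcongr
    _ = M * (|d ω| ^ s + |d ω| ^ (m - s) * |d ω| ^ s) := by ring

end Moments

section ModifiedMLE

variable {Ω : Type*}

/-- The estimator `μ̂_i` of the paper: the mean of `X 0, …, X (i - 1)` together with `n0` fake
observations equal to `x0`. -/
noncomputable def modifiedMLE (n0 x0 : ℝ) (X : ℕ → Ω → ℝ) (i : ℕ) (ω : Ω) : ℝ :=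
  (n0 * x0 + ∑ j ∈ range i, X j ω) / ((i : ℝ) + n0)

variable {n0 : ℝ} (x0 : ℝ) {X : ℕ → Ω → ℝ}

lemma modifiedMLE_sub (hn0 : 0 < n0) (μ : ℝ) (i : ℕ) (ω : Ω) :
    modifiedMLE n0 x0 X i ω - μ
      = (n0 * (x0 - μ) + ∑ j ∈ range i, (X j ω - μ)) / ((i : ℝ) + n0) := by
  have : (i : ℝ) + n0 ≠ 0 := by positivity
  rw [modifiedMLE, sum_sub_distrib, sum_const, card_range, nsmul_eq_mul]
  field_simp
  ring

lemma modifiedMLE_neg (i : ℕ) (ω : Ω) :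
    modifiedMLE n0 (-x0) (fun j ω => -X j ω) i ω = -modifiedMLE n0 x0 X i ω := by
  simp only [modifiedMLE, sum_neg_distrib, ← neg_div]
  ring

lemma modifiedMLE_le_max (hn0 : 0 < n0) {g : ℝ} {i : ℕ} {ω : Ω} (h : ∀ j, X j ω ≤ g) :
    modifiedMLE n0 x0 X i ω ≤ max x0 g := by
  rw [modifiedMLE, div_le_iff₀ (by positivity)]
  calc n0 * x0 + ∑ j ∈ range i, X j ω ≤ n0 * max x0 g + ∑ _j ∈ range i, max x0 g := by
        gcongr with j
        exacts [le_max_left _ _, (h j).trans (le_max_right _ _)]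
    _ = max x0 g * ((i : ℝ) + n0) := by simp; ring

variable [MeasurableSpace Ω] {P : Measure Ω}

lemma memLp_modifiedMLE_sub [IsFiniteMeasure P] {p : ENNReal} (hX : ∀ j, MemLp (X j) p P)
    (hn0 : 0 < n0) (μ : ℝ) (i : ℕ) : MemLp (fun ω => modifiedMLE n0 x0 X i ω - μ) p P := by
  have hsub : ∀ j, MemLp (fun ω => X j ω - μ) p P := fun j => (hX j).sub (memLp_const μ)
  have hsum : MemLp (fun ω => n0 * (x0 - μ) + ∑ j ∈ range i, (X j ω - μ)) p P :=
    (memLp_const (n0 * (x0 - μ))).add (memLp_finsetSum (range i) fun j _ => hsub j)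
  have hfun : (fun ω => modifiedMLE n0 x0 X i ω - μ)
      = fun ω => ((i : ℝ) + n0)⁻¹ * (n0 * (x0 - μ) + ∑ j ∈ range i, (X j ω - μ)) :=
    funext fun ω => by rw [modifiedMLE_sub x0 hn0, div_eq_inv_mul]
  rw [hfun]
  exact hsum.const_mul _

theorem exists_abs_integral_sum_sub_pow_le [IsProbabilityMeasure P]
    (hmeas : ∀ j, Measurable (X j)) (hindep : iIndepFun X P)
    (hident : ∀ j, IdentDistrib (X j) (X 0) P P) (hint : Integrable (X 0) P)
    {m : ℕ} (hmom : MemLp (X 0) m P) :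
    ∃ C, 0 ≤ C ∧ ∀ i : ℕ, m / 2 ≤ i →
      |∫ ω, (∑ j ∈ range i, (X j ω - P[X 0])) ^ m ∂P| ≤ C * (i : ℝ) ^ (m / 2) := by
  set μ := P[X 0]
  set W : ℕ → Ω → ℝ := fun j ω => X j ω - μ
  have hWmem : ∀ j, MemLp (W j) m P := fun j => ((hident j).memLp_iff.2 hmom).sub (memLp_const μ)
  have hWmean : ∀ j, ∫ ω, W j ω ∂P = 0 := fun j => by
    simp only [W, integral_sub ((hident j).integrable_iff.2 hint) (integrable_const μ),
      (hident j).integral_eq, integral_const, probReal_univ, one_smul, μ, sub_self]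
  set B := 1 + ∫ ω, |W 0 ω| ^ m ∂P
  have hB1 : 1 ≤ B := le_add_of_nonneg_right (by positivity)
  have hB : ∀ j, ∀ c ≤ m, |∫ ω, W j ω ^ c ∂P| ≤ B := fun j c hc =>
    (abs_integral_pow_le_one_add_integral_abs_pow (hWmem j) hc).trans_eq <| congrArg (1 + ·)
      ((hident j).comp (u := fun x => |x - μ| ^ m) (by fun_prop)).integral_eq
  refine ⟨(m + 1) ^ (m / 2) * m ! * B ^ m, by positivity, fun i hi => ?_⟩
  have := abs_integral_sum_pow_le (W := W)
    (hindep.comp (fun j x => x - μ) fun j => by fun_prop) (fun j => (hmeas j).sub_const μ)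
    (fun j c hc => ((hWmem j).mono_exponent (by exact_mod_cast hc)).integrable_pow) hWmean hB1
    hB (range i) (by simpa using hi)
  rwa [card_range] at this

/-- With `S` the centred sum, `μ̂_i - μ* = (n0 (x0 - μ*) + S) / (i + n0)`, and
`(a + S) ^ m ≤ 2 ^ (m - 1) (a ^ m + S ^ m)` reduces the claim to `E S ^ m = O(i ^ (m / 2))`. -/
theorem exists_integral_modifiedMLE_sub_pow_le [IsProbabilityMeasure P]
    (hmeas : ∀ j, Measurable (X j)) (hindep : iIndepFun X P)
    (hident : ∀ j, IdentDistrib (X j) (X 0) P P) (hint : Integrable (X 0) P)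
    {m : ℕ} (hm : Even m) (hmom : MemLp (X 0) m P) (hn0 : 0 < n0) :
    ∃ D, 0 ≤ D ∧ ∀ i : ℕ, 0 < i → m / 2 ≤ i →
      ∫ ω, (modifiedMLE n0 x0 X i ω - P[X 0]) ^ m ∂P ≤ D * ((i : ℝ) ^ (m / 2))⁻¹ := by
  obtain ⟨C, hC, hS⟩ := exists_abs_integral_sum_sub_pow_le hmeas hindep hident hint hmom
  set μ := P[X 0]
  set a := n0 * (x0 - μ)
  have ha : 0 ≤ a ^ m := hm.pow_nonneg a
  refine ⟨2 ^ (m - 1) * (a ^ m + C), by positivity, fun i hi hmi => ?_⟩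
  have hSint : Integrable (fun ω => (∑ j ∈ range i, (X j ω - μ)) ^ m) P :=
    (memLp_finsetSum _ fun j _ => ((hident j).memLp_iff.2 hmom).sub (memLp_const μ)).integrable_pow
  set q : ℝ := (i : ℝ) ^ (m / 2)
  have hq : 1 ≤ q := one_le_pow₀ (by exact_mod_cast hi)
  have hqm : q ^ 2 ≤ ((i : ℝ) + n0) ^ m := by
    rw [← pow_mul, Nat.div_mul_cancel hm.two_dvd]
    gcongr
    linarith
  calc ∫ ω, (modifiedMLE n0 x0 X i ω - μ) ^ m ∂P
      ≤ ∫ ω, 2 ^ (m - 1) / ((i : ℝ) + n0) ^ m * (a ^ m + (∑ j ∈ range i, (X j ω - μ)) ^ m) ∂P := by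
        refine integral_mono_of_nonneg (.of_forall fun ω => hm.pow_nonneg _)
          (((integrable_const _).add hSint).const_mul _) (.of_forall fun ω => ?_)
        simp only [modifiedMLE_sub x0 hn0, div_pow]
        rw [div_mul_eq_mul_div, div_le_div_iff_of_pos_right (by positivity)]
        exact hm.add_pow_le
    _ = 2 ^ (m - 1) / ((i : ℝ) + n0) ^ m
          * (a ^ m + ∫ ω, (∑ j ∈ range i, (X j ω - μ)) ^ m ∂P) := by
        rw [integral_const_mul, integral_add (integrable_const _) hSint, integral_const,
          probReal_univ, one_smul]
    _ ≤ 2 ^ (m - 1) / q ^ 2 * (a ^ m * q + C * q) := by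
        gcongr ?_ * (?_ + ?_)
        · exact add_nonneg ha (integral_nonneg fun ω => hm.pow_nonneg _)
        · exact div_le_div_of_nonneg_left (by positivity) (by positivity) hqm
        · exact le_mul_of_one_le_right ha hq
        · exact (le_abs_self _).trans (hS i hmi)
    _ = 2 ^ (m - 1) * (a ^ m + C) * q⁻¹ := by
        field_simp

end ModifiedMLE

section SideConditions

variable {Ω : Type} [MeasurableSpace Ω] {P : Measure Ω} {n0 : ℝ} {s : ℕ} {Y : ℕ → Ω → ℝ}
  {fT : ℝ → ℝ}

/-- If `Y 0` is bounded above, `x ≥ A` never happens on the range of `μ̂_i`. Otherwise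
`fT = O(x ^ (k - s - 2))`; the weaker exponent `k - s` suffices because `Y 0` has `k` moments. -/
theorem SideCond.exists_bound_on_range (hcond : SideCond P (Y 0) fT s) (hs : Even s)
    (hs4 : s ≤ 4) (hmeas : Measurable (Y 0)) (hident : ∀ j, IdentDistrib (Y j) (Y 0) P P)
    (hn0 : 0 < n0) (y0 ν : ℝ) :
    ∃ k, s ≤ k ∧ Even k ∧ ((k = s ∧ ∃ g, ∀ᵐ ω ∂P, Y 0 ω ≤ g) ∨ MemLp (Y 0) k P) ∧
      ∃ c A, 0 ≤ c ∧ ∀ᵐ ω ∂P, ∀ i, ∀ x ∈ Set.uIcc ν (modifiedMLE n0 y0 Y i ω), A ≤ x →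
        |fT x| ≤ c * (1 + |x - ν| ^ (k - s)) := by
  by_cases hb : ∃ g, ∀ᵐ ω ∂P, Y 0 ω ≤ g
  · obtain ⟨g, hg⟩ := hb
    refine ⟨s, le_rfl, hs, .inl ⟨rfl, g, hg⟩, 0, max ν (max y0 g) + 1, le_rfl, ?_⟩
    have hall : ∀ᵐ ω ∂P, ∀ j, Y j ω ≤ g :=
      ae_all_iff.2 fun j => (hident j).symm.ae_snd measurableSet_Iic hg
    filter_upwards [hall] with ω hω i x hx hAx
    have : x ≤ max ν (max y0 g) := hx.2.trans (max_le_max le_rfl (modifiedMLE_le_max y0 hn0 hω))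
    linarith
  · obtain ⟨k, hk4, hk, hmom, hO⟩ := hcond.1 hb
    obtain ⟨c, A, hc, hA⟩ :=
      hO.exists_abs_le_mul_pow (e := k - s) (by push_cast [show s ≤ k by omega]; omega)
    refine ⟨k, by omega, hk,
      .inr (memLp_of_integrable_abs_pow (by omega) hmeas.aestronglyMeasurable (hmom k le_rfl)),
      c * (2 ^ (k - s - 1) * (1 + |ν| ^ (k - s))), A, by positivity,
      .of_forall fun ω i x _ hAx => ?_⟩
    calc |fT x| ≤ c * x ^ (k - s) := hA x hAx
      _ ≤ c * |x| ^ (k - s) :=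
          mul_le_mul_of_nonneg_left ((le_abs_self _).trans (abs_pow x _).le) hc
      _ ≤ _ := by rw [mul_assoc]; gcongr; exact abs_pow_le_mul_one_add_abs_sub_pow x ν (k - s)

theorem SideCond.exists_bound_on_range_of_neg {X : ℕ → Ω → ℝ} {f : ℝ → ℝ}
    (hcond : SideCond P (fun ω => -(X 0 ω)) (fun μ => f (-μ)) s) (hs : Even s) (hs4 : s ≤ 4)
    (hmeas : Measurable (X 0)) (hident : ∀ j, IdentDistrib (X j) (X 0) P P) (hn0 : 0 < n0)
    (x0 μ : ℝ) :
    ∃ k, s ≤ k ∧ Even k ∧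
      ((k = s ∧ ∃ g, ∀ᵐ ω ∂P, -X 0 ω ≤ g) ∨ MemLp (fun ω => -X 0 ω) k P) ∧
      ∃ c A, 0 ≤ c ∧ ∀ᵐ ω ∂P, ∀ i, ∀ x ∈ Set.uIcc μ (modifiedMLE n0 x0 X i ω), x ≤ A →
        |f x| ≤ c * (1 + |x - μ| ^ (k - s)) := by
  obtain ⟨k, hsk, hk, hmom, c, A, hc, hbound⟩ :=
    hcond.exists_bound_on_range (Y := fun j ω => -X j ω) hs hs4 hmeas.neg
      (fun j => (hident j).comp measurable_neg) hn0 (-x0) (-μ)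
  refine ⟨k, hsk, hk, hmom, c, -A, hc, ?_⟩
  filter_upwards [hbound] with ω hω i x hx hxA
  have hx' : -x ∈ Set.uIcc (-μ) (modifiedMLE n0 (-x0) (fun j ω => -X j ω) i ω) := by
    rw [modifiedMLE_neg, ← Set.image_neg_uIcc]
    exact Set.mem_image_of_mem _ hx
  have hfx := hω i (-x) hx' (by linarith)
  rwa [neg_neg, neg_sub_neg, abs_sub_comm] at hfx

end SideConditions

section Envelope

variable {Ω : Type} [MeasurableSpace Ω] {P : Measure Ω} {n0 : ℝ} {s : ℕ} {X : ℕ → Ω → ℝ}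
  {f : ℝ → ℝ}

/-- Continuity of `f` bounds it on the middle interval; the side conditions for `X` and `-X`
bound it on the two tails. -/
theorem exists_growth_envelope [IsFiniteMeasure P] (hmeas : ∀ i, Measurable (X i))
    (hident : ∀ i, IdentDistrib (X i) (X 0) P P) (hn0 : 0 < n0) (x0 μ : ℝ) (hs : Even s)
    (hs4 : s ≤ 4) (hf : Continuous f) (hcondX : SideCond P (X 0) f s)
    (hcondnegX : SideCond P (fun ω => -(X 0 ω)) (fun μ => f (-μ)) s) :
    ∃ m, s ≤ m ∧ Even m ∧ MemLp (X 0) m P ∧ ∃ M, 0 ≤ M ∧ ∀ᵐ ω ∂P, ∀ i,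
      ∀ x ∈ Set.uIcc μ (modifiedMLE n0 x0 X i ω),
        |f x| ≤ M * (1 + |modifiedMLE n0 x0 X i ω - μ| ^ (m - s)) := by
  obtain ⟨k₁, hsk₁, hk₁, hmom₁, c₁, A₁, hc₁, hupper⟩ :=
    hcondX.exists_bound_on_range hs hs4 (hmeas 0) hident hn0 x0 μ
  obtain ⟨k₂, hsk₂, hk₂, hmom₂, c₂, A₂, hc₂, hlower⟩ :=
    hcondnegX.exists_bound_on_range_of_neg hs hs4 (hmeas 0) hident hn0 x0 μ
  obtain ⟨M₀, hM₀⟩ := (isCompact_Icc (a := A₂) (b := A₁)).exists_bound_of_continuousOn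
    hf.continuousOn
  set m := max k₁ k₂
  set M := |M₀| + 2 * c₁ + 2 * c₂
  have hM : 0 ≤ M := by positivity
  refine ⟨m, hsk₁.trans (le_max_left _ _), ?_,
    memLp_max_of_bdd_or_memLp (hmeas 0).aestronglyMeasurable hsk₁ hsk₂ hmom₁ hmom₂, M, hM, ?_⟩
  · rcases le_total k₁ k₂ with h | h
    · rwa [show m = k₂ from max_eq_right h]
    · rwa [show m = k₁ from max_eq_left h]
  filter_upwards [hupper, hlower] with ω hω₁ hω₂ i x hx
  suffices h : |f x| ≤ M * (1 + |x - μ| ^ (m - s)) from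
    h.trans (mul_le_mul_of_nonneg_left (add_le_add_right
      (pow_le_pow_left₀ (abs_nonneg _) (Set.abs_sub_left_of_mem_uIcc hx) _) 1) hM)
  have hgrow {c : ℝ} {k : ℕ} (hc : 0 ≤ c) (hk : k ≤ m) :
      c * (1 + |x - μ| ^ (k - s)) ≤ 2 * c * (1 + |x - μ| ^ (m - s)) := by
    have := pow_le_one_add_pow (abs_nonneg (x - μ)) (Nat.sub_le_sub_right hk s)
    have : 0 ≤ |x - μ| ^ (m - s) := by positivity
    nlinarith
  rcases le_or_gt A₁ x with h₁ | h₁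
  · calc |f x| ≤ c₁ * (1 + |x - μ| ^ (k₁ - s)) := hω₁ i x hx h₁
      _ ≤ 2 * c₁ * (1 + |x - μ| ^ (m - s)) := hgrow hc₁ (le_max_left _ _)
      _ ≤ _ := by gcongr; linarith [abs_nonneg M₀]
  rcases le_or_gt x A₂ with h₂ | h₂
  · calc |f x| ≤ c₂ * (1 + |x - μ| ^ (k₂ - s)) := hω₂ i x hx h₂
      _ ≤ 2 * c₂ * (1 + |x - μ| ^ (m - s)) := hgrow hc₂ (le_max_right _ _)
      _ ≤ _ := by gcongr; linarith [abs_nonneg M₀]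
  · calc |f x| ≤ |M₀| := (hM₀ x ⟨h₂.le, h₁.le⟩).trans (le_abs_self _)
      _ ≤ |M₀| * (1 + |x - μ| ^ (m - s)) :=
          le_mul_of_one_le_right (abs_nonneg _) (le_add_of_nonneg_right (by positivity))
      _ ≤ _ := by gcongr; linarith

end Envelope

/-- **Lemma 4 (the bounding lemma; Grünwald–Kotłowski).**  Fix `s ∈ {0, 2, 4}` and a
continuous `f`.  Let `X_0, X_1, …` be i.i.d. `∼ P` with mean `μ*`, and let
`μ̂_i := (n₀·x₀ + ∑_{j<i} X_j)/(i + n₀)`.  Under the growth/moment condition for both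
`T := X` and `T := −X`, the quantity `E_P[f(μ)·(μ̂_i − μ*)^s]`, where `μ` is any
measurably chosen point between `μ*` and `μ̂_i`, is of order `O(i^{−s/2})` as `i → ∞`,
uniformly over all such measurable choices of `μ`. -/
theorem lemma_bounding
    {Ω : Type} [MeasurableSpace Ω] (P : Measure Ω) [IsProbabilityMeasure P]
    (X : ℕ → Ω → ℝ) (hmeas : ∀ i, Measurable (X i))
    (hindep : iIndepFun X P)
    (hident : ∀ i, IdentDistrib (X i) (X 0) P P)
    (hXint : Integrable (X 0) P)
    (μstar : ℝ) (hμstar : μstar = ∫ ω, X 0 ω ∂P)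
    (n0 : ℝ) (hn0 : 0 < n0) (x0 : ℝ)
    (s : ℕ) (hs : s = 0 ∨ s = 2 ∨ s = 4)
    (f : ℝ → ℝ) (hf : Continuous f)
    (hcondX : SideCond P (X 0) f s)
    (hcondnegX : SideCond P (fun ω => -(X 0 ω)) (fun μ => f (-μ)) s) :
    ∃ C : ℝ, ∃ N : ℕ,
      ∀ ξ : ℕ → Ω → ℝ, (∀ i, Measurable (ξ i)) →
        (∀ i ω, ξ i ω ∈
          Set.uIcc μstar ((n0 * x0 + ∑ j ∈ Finset.range i, X j ω) / ((i : ℝ) + n0))) →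
        ∀ i ≥ N,
          |∫ ω, f (ξ i ω) *
              ((n0 * x0 + ∑ j ∈ Finset.range i, X j ω) / ((i : ℝ) + n0) - μstar) ^ s ∂P|
            ≤ C * ((i : ℝ) ^ (s / 2 : ℕ))⁻¹ := by
  subst hμstar
  have hs_even : Even s := by rcases hs with rfl | rfl | rfl <;> decide
  obtain ⟨m, hsm, hm, hmom, M, hM0, hM⟩ :=
    exists_growth_envelope hmeas hident hn0 x0 _ hs_even (by omega) hf hcondX hcondnegX
  obtain ⟨Ds, -, hDs⟩ := exists_integral_modifiedMLE_sub_pow_le x0 hmeas hindep hident hXint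
    hs_even (hmom.mono_exponent (by exact_mod_cast hsm)) hn0
  obtain ⟨Dm, hDm0, hDm⟩ :=
    exists_integral_modifiedMLE_sub_pow_le x0 hmeas hindep hident hXint hm hmom hn0
  refine ⟨M * (Ds + Dm), m + 1, fun ξ _ hξ i hi => ?_⟩
  have hi0 : 0 < i := by omega
  calc |∫ ω, f (ξ i ω) * (modifiedMLE n0 x0 X i ω - P[X 0]) ^ s ∂P|
      ≤ M * (∫ ω, (modifiedMLE n0 x0 X i ω - P[X 0]) ^ s ∂P
          + ∫ ω, (modifiedMLE n0 x0 X i ω - P[X 0]) ^ m ∂P) :=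
        abs_integral_mul_pow_le hs_even hm hsm
          (memLp_modifiedMLE_sub x0 (fun j => (hident j).memLp_iff.2 hmom) hn0 _ i)
          (hM.mono fun ω hω => hω i _ (hξ i ω))
    _ ≤ M * (Ds * ((i : ℝ) ^ (s / 2))⁻¹ + Dm * ((i : ℝ) ^ (s / 2))⁻¹) := by
        gcongr
        · exact hDs i hi0 (by omega)
        · refine (hDm i hi0 (by omega)).trans ?_
          gcongr
          exact_mod_cast hi0
    _ = M * (Ds + Dm) * ((i : ℝ) ^ (s / 2 : ℕ))⁻¹ := by ring
end

section
/- Let M = {M_μ : μ ∈ Θ_mean} be a single-parameter regular exponential family in its mean-value parameterization, and let μ*, μ̄ ∈ Θ_mean with μ̄ ≠ μ*. Then the function λ ↦ D(M_{μ*} ‖ M_{λμ* + (1−λ)μ̄}) is strictly decreasing on λ ∈ [0, 1]; in particular, if μ̄' lies between μ* and μ̄ (i.e., μ̄' = λμ* + (1−λ)μ̄ for some λ ∈ [0,1]), then D(M_{μ*} ‖ M_{μ̄}) ≥ D(M_{μ*} ‖ M_{μ̄'}). -/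
open MeasureTheory Filter Real Asymptotics ProbabilityTheory

/-- A single-parameter regular exponential family on outcome space `Z`, relative to a base
measure `ν`, given in its mean-value parameterization.  `Θ` is the mean-value parameter
space (an open interval), `X` the sufficient statistic, `carrier` the carrier `h`,
`natParam μ` the natural parameter corresponding to the mean value `μ`, `Znorm` the
normalizing constant `Z(η)`, and `dens μ` the density of the member `M_μ` w.r.t. `ν`. -/
structure ExpFam (Z : Type) [MeasurableSpace Z] (ν : Measure Z) where
  Θ : Set ℝ
  Θ_open : IsOpen Θ
  Θ_ordConn : Θ.OrdConnected
  Θ_nonempty : Θ.Nonempty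
  X : Z → ℝ
  X_meas : Measurable X
  carrier : Z → ℝ
  carrier_nonneg : ∀ z, 0 ≤ carrier z
  natParam : ℝ → ℝ
  Znorm : ℝ → ℝ
  Znorm_pos : ∀ μ ∈ Θ, 0 < Znorm (natParam μ)
  dens : ℝ → Z → ℝ
  dens_def : ∀ μ ∈ Θ, ∀ z,
    dens μ z = Real.exp (-(natParam μ) * X z) * carrier z / Znorm (natParam μ)
  dens_meas : ∀ μ, Measurable (dens μ)
  dens_integrable : ∀ μ ∈ Θ, Integrable (dens μ) ν
  dens_integral_one : ∀ μ ∈ Θ, ∫ z, dens μ z ∂ν = 1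
  mean_integrable : ∀ μ ∈ Θ, Integrable (fun z => X z * dens μ z) ν
  mean_eq : ∀ μ ∈ Θ, ∫ z, X z * dens μ z ∂ν = μ
  var_integrable : ∀ μ ∈ Θ, Integrable (fun z => (X z - μ) ^ 2 * dens μ z) ν
  var_pos : ∀ μ ∈ Θ, 0 < ∫ z, (X z - μ) ^ 2 * dens μ z ∂ν

namespace ExpFam

variable {Z : Type} [MeasurableSpace Z] {ν : Measure Z}

/-- The member `M_μ` of the family, as a measure on `Z`. -/
noncomputable def toMeasure (F : ExpFam Z ν) (μ : ℝ) : Measure Z :=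
  ν.withDensity (fun z => ENNReal.ofReal (F.dens μ z))

/-- The variance `var_{M_μ}(X)` of the sufficient statistic under the member with mean `μ`. -/
noncomputable def var (F : ExpFam Z ν) (μ : ℝ) : ℝ :=
  ∫ z, (F.X z - μ) ^ 2 * F.dens μ z ∂ν

/-- Fisher information in the mean-value parameterization: `I(μ) = 1 / var_{M_μ}(X)`. -/
noncomputable def fisher (F : ExpFam Z ν) (μ : ℝ) : ℝ := (F.var μ)⁻¹

/-- Kullback-Leibler divergence `D(M_{μ₁} ‖ M_{μ₂})` between two members of the family. -/
noncomputable def kl (F : ExpFam Z ν) (μ₁ μ₂ : ℝ) : ℝ :=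
  ∫ z, F.dens μ₁ z * Real.log (F.dens μ₁ z / F.dens μ₂ z) ∂ν

end ExpFam

/-- The prefix `z^i = (z_1, …, z_i)` of a tuple `z^n`, for `i : Fin n`. -/
def prefixOf {Z : Type} {n : ℕ} (zs : Fin n → Z) (i : Fin n) : Fin i.val → Z :=
  fun j => zs (Fin.castLE i.isLt.le j)

/-- Codelength `L_U(z^n) = ∑_{i<n} - ln M_{μ̄_i(z^i)}(z_{i+1})` of the plug-in universal
code based on the estimator sequence `est`. -/
noncomputable def pluginCodelen {Z : Type} [MeasurableSpace Z] {ν : Measure Z}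
    (F : ExpFam Z ν) (est : (n : ℕ) → (Fin n → Z) → ℝ) {n : ℕ} (zs : Fin n → Z) : ℝ :=
  ∑ i : Fin n, - Real.log (F.dens (est i.val (prefixOf zs i)) (zs i))

/-- Relative redundancy `R_U(n) = E_P[L_U(Z^n)] - inf_{μ ∈ Θ} E_P[- ln M_μ(Z^n)]` of the
plug-in code based on `est`, when the data are i.i.d. `∼ P`. -/
noncomputable def pluginRedundancy {Z : Type} [MeasurableSpace Z] {ν : Measure Z}
    (F : ExpFam Z ν) (P : Measure Z) (est : (n : ℕ) → (Fin n → Z) → ℝ) (n : ℕ) : ℝ :=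
  (∫ zs : Fin n → Z, pluginCodelen F est zs ∂(Measure.pi fun _ : Fin n => P)) -
    ⨅ μ : F.Θ, ∫ zs : Fin n → Z, ∑ i : Fin n, - Real.log (F.dens (μ : ℝ) (zs i))
      ∂(Measure.pi fun _ : Fin n => P)


/-! In natural coordinates `η = natParam`,
`D(M_μ ‖ M_μ') = (η μ' - η μ) μ + log Z(η μ') - log Z(η μ)`, which gives the three-point identity
`D(μ ‖ μ₂) - D(μ ‖ μ₁) = D(μ₁ ‖ μ₂) + (η μ₂ - η μ₁) (μ - μ₁)`.
Strict Jensen for the moment generating function of `X` makes `D` positive off the diagonal, and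
`D(μ₁ ‖ μ₂) + D(μ₂ ‖ μ₁) = (η μ₂ - η μ₁) (μ₁ - μ₂)` then shows that `η` is strictly decreasing.
Hence when `μ₁ ≠ μ₂` lies between `μ` and `μ₂`, the right side of the identity is positive. -/

namespace ExpFam

variable {Z : Type} [MeasurableSpace Z] {ν : Measure Z} (M : ExpFam Z ν) {μ μ₁ μ₂ t : ℝ}

lemma dens_nonneg (hμ : μ ∈ M.Θ) (z : Z) : 0 ≤ M.dens μ z := by
  rw [M.dens_def μ hμ z]
  have := M.carrier_nonneg z
  have := M.Znorm_pos μ hμ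
  positivity

lemma dens_pos (hμ : μ ∈ M.Θ) {z : Z} (hz : 0 < M.carrier z) : 0 < M.dens μ z := by
  rw [M.dens_def μ hμ z]
  have := M.Znorm_pos μ hμ
  positivity

lemma isProbabilityMeasure_toMeasure (hμ : μ ∈ M.Θ) : IsProbabilityMeasure (M.toMeasure μ) := by
  constructor
  rw [toMeasure, withDensity_apply _ MeasurableSet.univ, Measure.restrict_univ,
    ← ofReal_integral_eq_lintegral_ofReal (M.dens_integrable μ hμ)
      (ae_of_all _ (M.dens_nonneg hμ)), M.dens_integral_one μ hμ, ENNReal.ofReal_one]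

lemma integral_toMeasure (hμ : μ ∈ M.Θ) (g : Z → ℝ) :
    ∫ z, g z ∂M.toMeasure μ = ∫ z, M.dens μ z * g z ∂ν := by
  rw [toMeasure, integral_withDensity_eq_integral_toReal_smul (M.dens_meas μ).ennreal_ofReal
    (ae_of_all _ fun _ => ENNReal.ofReal_lt_top)]
  congr with z
  rw [ENNReal.toReal_ofReal (M.dens_nonneg hμ z), smul_eq_mul]

lemma integrable_toMeasure_iff (hμ : μ ∈ M.Θ) {g : Z → ℝ} :
    Integrable g (M.toMeasure μ) ↔ Integrable (fun z => M.dens μ z * g z) ν := by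
  rw [toMeasure, integrable_withDensity_iff_integrable_smul' (M.dens_meas μ).ennreal_ofReal
    (ae_of_all _ fun _ => ENNReal.ofReal_lt_top)]
  refine integrable_congr (ae_of_all _ fun z => ?_)
  dsimp only
  rw [ENNReal.toReal_ofReal (M.dens_nonneg hμ z), smul_eq_mul]

lemma integrable_X_toMeasure (hμ : μ ∈ M.Θ) : Integrable M.X (M.toMeasure μ) := by
  rw [M.integrable_toMeasure_iff hμ]
  simpa only [mul_comm] using M.mean_integrable μ hμ

lemma integral_X_toMeasure (hμ : μ ∈ M.Θ) : ∫ z, M.X z ∂M.toMeasure μ = μ := by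
  rw [M.integral_toMeasure hμ]
  simpa only [mul_comm] using M.mean_eq μ hμ

lemma integral_sub_sq_toMeasure_pos (hμ : μ ∈ M.Θ) : 0 < ∫ z, (M.X z - μ) ^ 2 ∂M.toMeasure μ := by
  rw [M.integral_toMeasure hμ]
  simpa only [mul_comm] using M.var_pos μ hμ

-- Strict because the positive variance keeps `X` from being a.s. constant under `M_μ`.
lemma exp_mul_lt_mgf (hμ : μ ∈ M.Θ) (ht : t ≠ 0)
    (hint : Integrable (fun z => exp (t * M.X z)) (M.toMeasure μ)) :
    exp (t * μ) < mgf M.X (M.toMeasure μ) t := by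
  have := M.isProbabilityMeasure_toMeasure hμ
  have hmean : ∫ z, t * M.X z ∂M.toMeasure μ = t * μ := by
    rw [integral_const_mul, M.integral_X_toMeasure hμ]
  rcases strictConvexOn_exp.ae_eq_const_or_map_average_lt continuous_exp.continuousOn
      isClosed_univ (ae_of_all _ fun z => Set.mem_univ (t * M.X z))
      ((M.integrable_X_toMeasure hμ).const_mul t) hint with hconst | hlt
  · have hX : (fun z => (M.X z - μ) ^ 2) =ᵐ[M.toMeasure μ] 0 := by
      filter_upwards [hconst] with z hz
      rw [average_eq_integral, hmean] at hz
      simp [mul_left_cancel₀ ht hz]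
    have := M.integral_sub_sq_toMeasure_pos hμ
    rw [integral_eq_zero_of_ae hX] at this
    exact absurd this (lt_irrefl 0)
  · rwa [average_eq_integral, average_eq_integral, hmean] at hlt

lemma dens_mul_exp_natParam_sub (h₁ : μ₁ ∈ M.Θ) (h₂ : μ₂ ∈ M.Θ) (z : Z) :
    M.dens μ₁ z * exp ((M.natParam μ₁ - M.natParam μ₂) * M.X z)
      = M.Znorm (M.natParam μ₂) / M.Znorm (M.natParam μ₁) * M.dens μ₂ z := by
  have := (M.Znorm_pos μ₁ h₁).ne'
  have := (M.Znorm_pos μ₂ h₂).ne'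
  rw [M.dens_def μ₁ h₁ z, M.dens_def μ₂ h₂ z, show -M.natParam μ₂ * M.X z
    = -M.natParam μ₁ * M.X z + (M.natParam μ₁ - M.natParam μ₂) * M.X z by ring, exp_add]
  field_simp

lemma integrable_exp_natParam_sub (h₁ : μ₁ ∈ M.Θ) (h₂ : μ₂ ∈ M.Θ) :
    Integrable (fun z => exp ((M.natParam μ₁ - M.natParam μ₂) * M.X z)) (M.toMeasure μ₁) := by
  rw [M.integrable_toMeasure_iff h₁]
  simpa only [M.dens_mul_exp_natParam_sub h₁ h₂] using (M.dens_integrable μ₂ h₂).const_mul _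

lemma mgf_natParam_sub (h₁ : μ₁ ∈ M.Θ) (h₂ : μ₂ ∈ M.Θ) :
    mgf M.X (M.toMeasure μ₁) (M.natParam μ₁ - M.natParam μ₂)
      = M.Znorm (M.natParam μ₂) / M.Znorm (M.natParam μ₁) := by
  rw [mgf, M.integral_toMeasure h₁]
  simp only [M.dens_mul_exp_natParam_sub h₁ h₂]
  rw [integral_const_mul, M.dens_integral_one μ₂ h₂, mul_one]

lemma log_dens (hμ : μ ∈ M.Θ) {z : Z} (hz : 0 < M.carrier z) :
    log (M.dens μ z)
      = -M.natParam μ * M.X z + log (M.carrier z) - log (M.Znorm (M.natParam μ)) := by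
  rw [M.dens_def μ hμ z, log_div (by positivity) (M.Znorm_pos μ hμ).ne',
    log_mul (exp_ne_zero _) hz.ne', log_exp]

lemma kl_eq (h₁ : μ₁ ∈ M.Θ) (h₂ : μ₂ ∈ M.Θ) :
    M.kl μ₁ μ₂ = (M.natParam μ₂ - M.natParam μ₁) * μ₁
      + (log (M.Znorm (M.natParam μ₂)) - log (M.Znorm (M.natParam μ₁))) := by
  have hpt : ∀ z, M.dens μ₁ z * log (M.dens μ₁ z / M.dens μ₂ z)
      = (M.natParam μ₂ - M.natParam μ₁) * (M.X z * M.dens μ₁ z)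
        + (log (M.Znorm (M.natParam μ₂)) - log (M.Znorm (M.natParam μ₁))) * M.dens μ₁ z := by
    intro z
    rcases (M.carrier_nonneg z).eq_or_lt with hc | hc
    · have hd : M.dens μ₁ z = 0 := by rw [M.dens_def μ₁ h₁ z, ← hc, mul_zero, zero_div]
      simp [hd]
    · rw [log_div (M.dens_pos h₁ hc).ne' (M.dens_pos h₂ hc).ne', M.log_dens h₁ hc, M.log_dens h₂ hc]
      ring
  rw [kl, integral_congr_ae (ae_of_all _ hpt),
    integral_add ((M.mean_integrable μ₁ h₁).const_mul _) ((M.dens_integrable μ₁ h₁).const_mul _),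
    integral_const_mul, integral_const_mul, M.mean_eq μ₁ h₁, M.dens_integral_one μ₁ h₁, mul_one]

lemma natParam_injOn : Set.InjOn M.natParam M.Θ := by
  intro μ₁ h₁ μ₂ h₂ h
  have hdens : M.dens μ₁ = M.dens μ₂ := by
    funext z
    rw [M.dens_def μ₁ h₁ z, M.dens_def μ₂ h₂ z, h]
  rw [← M.mean_eq μ₁ h₁, ← M.mean_eq μ₂ h₂, hdens]

lemma kl_pos (h₁ : μ₁ ∈ M.Θ) (h₂ : μ₂ ∈ M.Θ) (hne : μ₁ ≠ μ₂) : 0 < M.kl μ₁ μ₂ := by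
  have hη : M.natParam μ₁ - M.natParam μ₂ ≠ 0 :=
    sub_ne_zero.mpr fun h => hne (M.natParam_injOn h₁ h₂ h)
  have hjensen := M.exp_mul_lt_mgf h₁ hη (M.integrable_exp_natParam_sub h₁ h₂)
  have hZ₁ := M.Znorm_pos μ₁ h₁
  have hZ₂ := M.Znorm_pos μ₂ h₂
  rw [M.mgf_natParam_sub h₁ h₂, ← lt_log_iff_exp_lt (by positivity),
    log_div hZ₂.ne' hZ₁.ne'] at hjensen
  rw [M.kl_eq h₁ h₂]
  linarith

lemma natParam_strictAntiOn : StrictAntiOn M.natParam M.Θ := by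
  intro μ₁ h₁ μ₂ h₂ hlt
  have k₁₂ := M.kl_pos h₁ h₂ hlt.ne
  have k₂₁ := M.kl_pos h₂ h₁ hlt.ne'
  rw [M.kl_eq h₁ h₂] at k₁₂
  rw [M.kl_eq h₂ h₁] at k₂₁
  nlinarith

lemma kl_sub_kl (h : μ ∈ M.Θ) (h₁ : μ₁ ∈ M.Θ) (h₂ : μ₂ ∈ M.Θ) :
    M.kl μ μ₂ - M.kl μ μ₁ = M.kl μ₁ μ₂ + (M.natParam μ₂ - M.natParam μ₁) * (μ - μ₁) := by
  rw [M.kl_eq h h₁, M.kl_eq h h₂, M.kl_eq h₁ h₂]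
  ring

lemma kl_lt_kl_of_mem_uIcc (h : μ ∈ M.Θ) (h₂ : μ₂ ∈ M.Θ) (h₁ : μ₁ ∈ Set.uIcc μ μ₂)
    (hne : μ₁ ≠ μ₂) : M.kl μ μ₁ < M.kl μ μ₂ := by
  have h₁Θ : μ₁ ∈ M.Θ := M.Θ_ordConn.uIcc_subset h h₂ h₁
  have hcross : 0 ≤ (M.natParam μ₂ - M.natParam μ₁) * (μ - μ₁) := by
    rcases hne.lt_or_gt with hlt | hgt
    · have := M.natParam_strictAntiOn h₁Θ h₂ hlt
      have : μ ≤ μ₁ := by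
        rcases Set.mem_uIcc.mp h₁ with ⟨hμ, -⟩ | ⟨h₂μ, -⟩ <;> linarith
      nlinarith
    · have := M.natParam_strictAntiOn h₂ h₁Θ hgt
      have : μ₁ ≤ μ := by
        rcases Set.mem_uIcc.mp h₁ with ⟨-, hμ⟩ | ⟨-, h₂μ⟩ <;> linarith
      nlinarith
  linarith [M.kl_sub_kl h h₁Θ h₂, M.kl_pos h₁Θ h₂ hne]

end ExpFam

/-- **Monotonicity of KL divergence along the mean-value segment.**  Let `M` be a
single-parameter regular exponential family in its mean-value parameterization and let
`μ*, μ̄ ∈ Θ_mean` with `μ̄ ≠ μ*`.  Then `λ ↦ D(M_{μ*} ‖ M_{λμ* + (1−λ)μ̄})` is strictly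
decreasing on `[0, 1]`; in particular, for any `μ̄' = λμ* + (1−λ)μ̄` with `λ ∈ [0,1]`,
`D(M_{μ*} ‖ M_{μ̄}) ≥ D(M_{μ*} ‖ M_{μ̄'})`. -/
theorem kl_strictAnti_on_segment
    {Z : Type} [MeasurableSpace Z] (ν : Measure Z)
    (M : ExpFam Z ν) (μstar μbar : ℝ)
    (hμstar : μstar ∈ M.Θ) (hμbar : μbar ∈ M.Θ) (hne : μbar ≠ μstar) :
    StrictAntiOn (fun lam : ℝ => M.kl μstar (lam * μstar + (1 - lam) * μbar))
      (Set.Icc 0 1) ∧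
    ∀ lam ∈ Set.Icc (0 : ℝ) 1,
      M.kl μstar (lam * μstar + (1 - lam) * μbar) ≤ M.kl μstar μbar := by
  have hmem : ∀ lam ∈ Set.Icc (0 : ℝ) 1, lam * μstar + (1 - lam) * μbar ∈ M.Θ := by
    intro lam hlam
    refine M.Θ_ordConn.uIcc_subset hμstar hμbar ?_
    rw [← segment_eq_uIcc]
    exact ⟨lam, 1 - lam, hlam.1, sub_nonneg.mpr hlam.2, by ring, rfl⟩
  have hanti : StrictAntiOn (fun lam : ℝ => M.kl μstar (lam * μstar + (1 - lam) * μbar))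
      (Set.Icc 0 1) := by
    intro a ha b hb hab
    refine M.kl_lt_kl_of_mem_uIcc hμstar (hmem a ha) ?_ fun h => hne ?_
    · rw [Set.mem_uIcc]
      rcases le_total μstar μbar with hle | hle
      · left; constructor <;> nlinarith [hb.2]
      · right; constructor <;> nlinarith [hb.2]
    · nlinarith
  refine ⟨hanti, fun lam hlam => ?_⟩
  simpa using hanti.antitoneOn ⟨le_rfl, zero_le_one⟩ hlam hlam.1
end
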